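/- arXiv:2001.03766 — 2 statements merged into one kernel-verified Lean document; each statement's English description precedes it below -/
import Mathlib

section
/- With c nonincreasing, nonnegative, u positive, and n̄ the least index with G_{n̄} ≥ 0 (assume 1 < n̄ ≤ n), define x̄ and x̃ as in Theorem 2 (x̄ = x^{(n̄−2)} + δ₁ e_{n̄−1}, x̃ = x^{(n̄−1)} + δ₂ e_{n̄} with δ₁ = min{c_{n̄−1} − U_{n̄−2}, u_{n̄−1}}, δ₂ = max{c_{n̄} − U_{n̄−1}, 0}). Then min{f(x̄), f(x̃)} = min{ f(x) : 0 ≤ x ≤ u }, i.e., the restricted minimizer over the box [x^{(n̄−2)}, x^{(n̄)}] is a global minimizer of f over the whole box [0, u]. -/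
open Finset

noncomputable def Usum (u : ℕ → ℝ) (k : ℕ) : ℝ := ∑ i ∈ Finset.Icc 1 k, u i

noncomputable def fobj (n : ℕ) (c x : ℕ → ℝ) : ℝ :=
  (1/2) * (∑ i ∈ Finset.Icc 1 n, x i)^2 - ∑ i ∈ Finset.Icc 1 n, c i * x i

noncomputable def xk (u : ℕ → ℝ) (k : ℕ) : ℕ → ℝ := fun i => if i ≤ k then u i else 0

noncomputable def Gseq (u c : ℕ → ℝ) (k : ℕ) : ℝ := Usum u (k-1) + u k / 2 - c k

lemma mul_nonneg_np (a b : ℝ) (ha : a ≤ 0) (hb : b ≤ 0) : 0 ≤ a * b := by nlinarith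

lemma key (n : ℕ) (c x y : ℕ → ℝ)
    (h : ∀ i ∈ Finset.Icc 1 n, 0 ≤ ((∑ j ∈ Finset.Icc 1 n, y j) - c i) * (x i - y i)) :
    fobj n c y ≤ fobj n c x := by
  set T := ∑ j ∈ Finset.Icc 1 n, y j with hT
  set S := ∑ j ∈ Finset.Icc 1 n, x j with hS
  have hsum : ∑ i ∈ Finset.Icc 1 n, (T - c i) * (x i - y i)
      = T * S - T * T - (∑ i ∈ Finset.Icc 1 n, c i * x i)
        + (∑ i ∈ Finset.Icc 1 n, c i * y i) := by
    have : ∀ i ∈ Finset.Icc 1 n, (T - c i) * (x i - y i)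
        = T * x i - T * y i - c i * x i + c i * y i := by intros; ring
    rw [Finset.sum_congr rfl this]
    simp only [Finset.sum_add_distrib, Finset.sum_sub_distrib, ← Finset.mul_sum, ← hS, ← hT]
  have h0 : 0 ≤ ∑ i ∈ Finset.Icc 1 n, (T - c i) * (x i - y i) := Finset.sum_nonneg h
  rw [hsum] at h0
  simp only [fobj, ← hS, ← hT]
  nlinarith [sq_nonneg (S - T)]

lemma sum_xk (u : ℕ → ℝ) (n k : ℕ) (hk : k ≤ n) :
    ∑ i ∈ Finset.Icc 1 n, xk u k i = Usum u k := by
  unfold xk Usum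
  rw [← Finset.sum_filter]
  congr 1
  ext i
  simp only [Finset.mem_filter, Finset.mem_Icc]
  omega

lemma sum_single (n m : ℕ) (a : ℝ) (hm : 1 ≤ m) (hmn : m ≤ n) :
    ∑ i ∈ Finset.Icc 1 n, (if i = m then a else 0) = a := by
  rw [Finset.sum_ite_eq' (Finset.Icc 1 n) m (fun _ => a)]
  simp [Finset.mem_Icc, hm, hmn]
theorem stmt11 (n : ℕ) (hn : 0 < n) (u c : ℕ → ℝ)
    (hu : ∀ i, 1 ≤ i → i ≤ n → 0 < u i)
    (hc : ∀ i j, 1 ≤ i → i ≤ j → j ≤ n → c j ≤ c i)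
    (hc0 : 0 ≤ c n)
    (nb : ℕ) (hnb1 : 1 < nb) (hnbn : nb ≤ n)
    (hGnb : 0 ≤ Gseq u c nb)
    (hleast : ∀ k, 1 ≤ k → k < nb → Gseq u c k < 0) :
    let δ1 : ℝ := min (c (nb-1) - Usum u (nb-2)) (u (nb-1))
    let δ2 : ℝ := max (c nb - Usum u (nb-1)) 0
    let xbar : ℕ → ℝ := fun i => xk u (nb-2) i + if i = nb-1 then δ1 else 0
    let xtil : ℕ → ℝ := fun i => xk u (nb-1) i + if i = nb then δ2 else 0
    IsLeast ((fobj n c) '' {x | ∀ i, 1 ≤ i → i ≤ n → 0 ≤ x i ∧ x i ≤ u i})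
      (min (fobj n c xbar) (fobj n c xtil)) := by
  intro δ1 δ2 xbar xtil
  have hxb : ∀ i, xbar i = (if i ≤ nb-2 then u i else 0) + (if i = nb-1 then δ1 else 0) :=
    fun i => rfl
  have hxt : ∀ i, xtil i = (if i ≤ nb-1 then u i else 0) + (if i = nb then δ2 else 0) :=
    fun i => rfl
  have hd1 : δ1 = min (c (nb-1) - Usum u (nb-2)) (u (nb-1)) := rfl
  have hd2 : δ2 = max (c nb - Usum u (nb-1)) 0 := rfl
  have hu1 : 0 < u (nb-1) := hu _ (by omega) (by omega)
  have hun : 0 < u nb := hu _ (by omega) (by omega)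
  have hG1 : Gseq u c (nb-1) < 0 := hleast _ (by omega) (by omega)
  have hG1' : Usum u (nb-2) + u (nb-1) / 2 - c (nb-1) < 0 := by
    have e : nb - 1 - 1 = nb - 2 := by omega
    unfold Gseq at hG1; rw [e] at hG1; exact hG1
  have hGnb' : 0 ≤ Usum u (nb-1) + u nb / 2 - c nb := hGnb
  have hδ1pos : 0 ≤ δ1 := by rw [hd1]; apply le_min <;> linarith
  have hδ1le : δ1 ≤ u (nb-1) := by rw [hd1]; exact min_le_right _ _
  have hδ2pos : 0 ≤ δ2 := le_max_right _ _
  have hδ2le : δ2 ≤ u nb := by rw [hd2]; apply max_le <;> linarith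
  have hUs : Usum u (nb-1) = Usum u (nb-2) + u (nb-1) := by
    have e : nb - 1 = (nb-2) + 1 := by omega
    rw [e]; exact Finset.sum_Icc_succ_top (by omega) u
  -- feasibility
  have hfeasb : xbar ∈ {x : ℕ → ℝ | ∀ i, 1 ≤ i → i ≤ n → 0 ≤ x i ∧ x i ≤ u i} := by
    intro i h1 h2
    rw [hxb i]
    rcases Nat.lt_or_ge i (nb-1) with h | h
    · have e1 : i ≤ nb - 2 := by omega
      have e2 : ¬ (i = nb-1) := by omega
      rw [if_pos e1, if_neg e2, add_zero]
      exact ⟨le_of_lt (hu i h1 h2), le_refl _⟩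
    · rcases Nat.eq_or_lt_of_le h with h' | h'
      · have e1 : ¬ (i ≤ nb - 2) := by omega
        rw [if_neg e1, if_pos h'.symm, zero_add, ← h']
        exact ⟨hδ1pos, hδ1le⟩
      · have e1 : ¬ (i ≤ nb - 2) := by omega
        have e2 : ¬ (i = nb - 1) := by omega
        rw [if_neg e1, if_neg e2, add_zero]
        exact ⟨le_refl _, le_of_lt (hu i h1 h2)⟩
  have hfeast : xtil ∈ {x : ℕ → ℝ | ∀ i, 1 ≤ i → i ≤ n → 0 ≤ x i ∧ x i ≤ u i} := by
    intro i h1 h2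
    rw [hxt i]
    rcases Nat.lt_or_ge i nb with h | h
    · have e1 : i ≤ nb - 1 := by omega
      have e2 : ¬ (i = nb) := by omega
      rw [if_pos e1, if_neg e2, add_zero]
      exact ⟨le_of_lt (hu i h1 h2), le_refl _⟩
    · rcases Nat.eq_or_lt_of_le h with h' | h'
      · have e1 : ¬ (i ≤ nb - 1) := by omega
        rw [if_neg e1, if_pos h'.symm, zero_add, ← h']
        exact ⟨hδ2pos, hδ2le⟩
      · have e1 : ¬ (i ≤ nb - 1) := by omega
        have e2 : ¬ (i = nb) := by omega
        rw [if_neg e1, if_neg e2, add_zero]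
        exact ⟨le_refl _, le_of_lt (hu i h1 h2)⟩
  -- sums
  have hSb : ∑ j ∈ Finset.Icc 1 n, xbar j = Usum u (nb-2) + δ1 := by
    have : ∑ j ∈ Finset.Icc 1 n, xbar j
        = (∑ j ∈ Finset.Icc 1 n, xk u (nb-2) j)
          + ∑ j ∈ Finset.Icc 1 n, (if j = nb-1 then δ1 else 0) := by
      rw [← Finset.sum_add_distrib]
    rw [this, sum_xk u n (nb-2) (by omega), sum_single n (nb-1) δ1 (by omega) (by omega)]
  have hSt : ∑ j ∈ Finset.Icc 1 n, xtil j = Usum u (nb-1) + δ2 := by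
    have : ∑ j ∈ Finset.Icc 1 n, xtil j
        = (∑ j ∈ Finset.Icc 1 n, xk u (nb-1) j)
          + ∑ j ∈ Finset.Icc 1 n, (if j = nb then δ2 else 0) := by
      rw [← Finset.sum_add_distrib]
    rw [this, sum_xk u n (nb-1) (by omega), sum_single n nb δ2 (by omega) (by omega)]
  constructor
  · rcases min_cases (fobj n c xbar) (fobj n c xtil) with ⟨h, _⟩ | ⟨h, _⟩ <;> rw [h]
    · exact ⟨xbar, hfeasb, rfl⟩
    · exact ⟨xtil, hfeast, rfl⟩
  · rintro v ⟨x, hx, rfl⟩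
    by_cases hcase : c (nb-1) ≤ Usum u (nb-1)
    · -- use xbar, T = c (nb-1)
      refine le_trans (min_le_left _ _) (key n c x xbar ?_)
      have hT : ∑ j ∈ Finset.Icc 1 n, xbar j = c (nb-1) := by
        rw [hSb, hd1, min_eq_left (by rw [hUs] at hcase; linarith)]; ring
      rw [hT]
      intro i hi
      rw [Finset.mem_Icc] at hi
      rw [hxb i]
      rcases Nat.lt_or_ge i (nb-1) with h | h
      · have e1 : i ≤ nb - 2 := by omega
        have e2 : ¬ (i = nb-1) := by omega
        simp only [if_pos e1, if_neg e2, add_zero]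
        have hci : c (nb-1) ≤ c i := hc i (nb-1) hi.1 (by omega) (by omega)
        have := (hx i hi.1 hi.2).2
        exact mul_nonneg_np _ _ (by linarith) (by linarith)
      · rcases Nat.eq_or_lt_of_le h with h' | h'
        · rw [← h']
          simp
        · have e1 : ¬ (i ≤ nb - 2) := by omega
          have e2 : ¬ (i = nb - 1) := by omega
          simp only [if_neg e1, if_neg e2, add_zero, sub_zero]
          have hci : c i ≤ c (nb-1) := hc (nb-1) i (by omega) (by omega) hi.2
          have := (hx i hi.1 hi.2).1
          exact mul_nonneg (by linarith) (by linarith)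
    · -- use xtil, T = max (c nb) (Usum u (nb-1))
      push_neg at hcase
      refine le_trans (min_le_right _ _) (key n c x xtil ?_)
      have hT : ∑ j ∈ Finset.Icc 1 n, xtil j = max (c nb) (Usum u (nb-1)) := by
        rw [hSt, hd2]
        rcases le_total (c nb) (Usum u (nb-1)) with h | h
        · rw [max_eq_right h, max_eq_right (by linarith)]; ring
        · rw [max_eq_left h, max_eq_left (by linarith)]; ring
      rw [hT]
      intro i hi
      rw [Finset.mem_Icc] at hi
      rw [hxt i]
      have hTle : ∀ i, 1 ≤ i → i ≤ nb - 1 → max (c nb) (Usum u (nb-1)) ≤ c i := by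
        intro i h1 h2
        apply max_le
        · exact hc i nb h1 (by omega) hnbn
        · have : c (nb-1) ≤ c i := hc i (nb-1) h1 h2 (by omega)
          linarith
      rcases Nat.lt_or_ge i nb with h | h
      · have e1 : i ≤ nb - 1 := by omega
        have e2 : ¬ (i = nb) := by omega
        simp only [if_pos e1, if_neg e2, add_zero]
        have hci := hTle i hi.1 e1
        have := (hx i hi.1 hi.2).2
        exact mul_nonneg_np _ _ (by linarith) (by linarith)
      · rcases Nat.eq_or_lt_of_le h with h' | h'
        · rw [← h']
          have e1 : ¬ (i ≤ nb - 1) := by omega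
          simp only [← h'] at e1 ⊢
          simp only [if_neg e1, if_pos rfl, zero_add]
          rcases le_total (c nb) (Usum u (nb-1)) with hcc | hcc
          · rw [max_eq_right hcc, hd2, max_eq_right (by linarith)]
            have := (hx nb (by omega) (by omega)).1
            simp only [if_true, sub_zero, eq_self_iff_true]
            exact mul_nonneg (by linarith) (by linarith)
          · rw [max_eq_left hcc, hd2, max_eq_left (by linarith)]
            simp
        · have e1 : ¬ (i ≤ nb - 1) := by omega
          have e2 : ¬ (i = nb) := by omega
          simp only [if_neg e1, if_neg e2, add_zero, sub_zero]
          have hci : c i ≤ c nb := hc nb i (by omega) (by omega) hi.2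
          have hmax : c nb ≤ max (c nb) (Usum u (nb-1)) := le_max_left _ _
          have := (hx i hi.1 hi.2).1
          exact mul_nonneg (by linarith) (by linarith)
end

section
/- Let x be a feasible point of the box [0, u] (with c nonincreasing, nonnegative, u positive), and let x' be its 'consecutive fill' as above with index k. If k ≥ n̄ (where n̄ is the least index with G_{n̄} ≥ 0), then f(x^{(k)}) ≤ f(x'). -/
open Finset

lemma sum_trunc (n k : ℕ) (hk : k + 1 ≤ n) (g : ℕ → ℝ)
    (hg : ∀ i, k + 1 < i → i ≤ n → g i = 0) :
    ∑ i ∈ Finset.Icc 1 n, g i = ∑ i ∈ Finset.Icc 1 (k+1), g i := by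
  refine (Finset.sum_subset (Finset.Icc_subset_Icc_right hk) ?_).symm
  intro i hi hni
  simp only [Finset.mem_Icc] at hi hni
  exact hg i (by omega) hi.2

lemma Usum_succ (u : ℕ → ℝ) (m : ℕ) : Usum u (m+1) = Usum u m + u (m+1) := by
  unfold Usum
  exact Finset.sum_Icc_succ_top (by omega) u

theorem stmt15 (n : ℕ) (hn : 0 < n) (u c : ℕ → ℝ)
    (hu : ∀ i, 1 ≤ i → i ≤ n → 0 < u i)
    (hc : ∀ i j, 1 ≤ i → i ≤ j → j ≤ n → c j ≤ c i)
    (hc0 : 0 ≤ c n)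
    (nb : ℕ) (hnb1 : 1 ≤ nb) (hnbn : nb ≤ n)
    (hGnb : 0 ≤ Gseq u c nb)
    (hleast : ∀ k, 1 ≤ k → k < nb → Gseq u c k < 0)
    (k : ℕ) (hk : k < n) (hknb : nb ≤ k)
    (x' : ℕ → ℝ)
    (h1 : ∀ i, 1 ≤ i → i ≤ k → x' i = u i)
    (h2 : 0 ≤ x' (k+1) ∧ x' (k+1) < u (k+1))
    (h3 : ∀ i, k + 1 < i → i ≤ n → x' i = 0) :
    fobj n c (xk u k) ≤ fobj n c x' := by
  have hk1 : 1 ≤ k := le_trans hnb1 hknb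
  have hkn : k + 1 ≤ n := hk
  -- G is nondecreasing on [nb, n], so G k ≥ 0
  have hGmono : ∀ m, nb ≤ m → m ≤ n → 0 ≤ Gseq u c m := by
    intro m hm hmn
    induction m, hm using Nat.le_induction with
    | base => exact hGnb
    | succ m hm ih =>
      have hmn' : m ≤ n := by omega
      have ih' := ih hmn'
      have hm1 : 1 ≤ m := le_trans hnb1 hm
      have hstep : Gseq u c m ≤ Gseq u c (m+1) := by
        unfold Gseq
        have h1 : Usum u (m+1-1) = Usum u (m-1) + u m := by
          have : m + 1 - 1 = (m-1) + 1 := by omega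
          rw [this, Usum_succ]
          congr 2
          omega
        rw [h1]
        have hum : 0 < u m := hu m hm1 hmn'
        have hum1 : 0 < u (m+1) := hu (m+1) (by omega) hmn
        have hcm : c (m+1) ≤ c m := hc m (m+1) hm1 (by omega) hmn
        linarith
      linarith
  have hGk : 0 ≤ Gseq u c k := hGmono k hknb (by omega)
  -- S = Usum u k ≥ c (k+1)
  have hSplit : Usum u k = Usum u (k-1) + u k := by
    conv_lhs => rw [show k = (k-1) + 1 by omega, Usum_succ]
    rw [show k - 1 + 1 = k by omega]
  have huk : 0 < u k := hu k hk1 (by omega)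
  have hck : c (k+1) ≤ c k := hc k (k+1) hk1 (by omega) hkn
  have hS : c (k+1) ≤ Usum u k := by
    unfold Gseq at hGk
    linarith
  -- Compute the sums
  set t := x' (k+1) with ht
  have hxk0 : ∀ i, k + 1 < i → i ≤ n → xk u k i = 0 := by
    intro i hi _
    unfold xk
    simp [Nat.not_le.mpr (by omega : k < i)]
  have hsum1 : ∑ i ∈ Finset.Icc 1 n, x' i = Usum u k + t := by
    rw [sum_trunc n k hkn x' h3, Finset.sum_Icc_succ_top (by omega)]
    have he : ∑ i ∈ Finset.Icc 1 k, x' i = Usum u k := by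
      unfold Usum
      apply Finset.sum_congr rfl
      intro i hi
      simp only [Finset.mem_Icc] at hi
      exact h1 i hi.1 hi.2
    rw [he]
  have hsum2 : ∑ i ∈ Finset.Icc 1 n, c i * x' i = (∑ i ∈ Finset.Icc 1 k, c i * u i) + c (k+1) * t := by
    rw [sum_trunc n k hkn _ (by intro i h1' h2'; rw [h3 i h1' h2', mul_zero]),
      Finset.sum_Icc_succ_top (by omega)]
    congr 1
    apply Finset.sum_congr rfl
    intro i hi
    simp only [Finset.mem_Icc] at hi
    rw [h1 i hi.1 hi.2]
  have hsum3 : ∑ i ∈ Finset.Icc 1 n, xk u k i = Usum u k := by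
    rw [sum_trunc n k hkn _ hxk0, Finset.sum_Icc_succ_top (by omega)]
    have : xk u k (k+1) = 0 := by unfold xk; simp
    rw [this, add_zero]
    unfold Usum
    apply Finset.sum_congr rfl
    intro i hi
    simp only [Finset.mem_Icc] at hi
    unfold xk
    simp [hi.2]
  have hsum4 : ∑ i ∈ Finset.Icc 1 n, c i * xk u k i = ∑ i ∈ Finset.Icc 1 k, c i * u i := by
    rw [sum_trunc n k hkn _ (by intro i h1' h2'; rw [hxk0 i h1' h2', mul_zero]),
      Finset.sum_Icc_succ_top (by omega)]
    have : xk u k (k+1) = 0 := by unfold xk; simp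
    rw [this, mul_zero, add_zero]
    apply Finset.sum_congr rfl
    intro i hi
    simp only [Finset.mem_Icc] at hi
    unfold xk
    simp [hi.2]
  unfold fobj
  rw [hsum1, hsum2, hsum3, hsum4]
  have ht0 : 0 ≤ t := h2.1
  nlinarith [sq_nonneg t, mul_nonneg ht0 (sub_nonneg.mpr hS)]
end
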